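/- arXiv:1512.07129 — 3 statements merged into one kernel-verified Lean document; each statement's English description precedes it below -/
import Mathlib

section
/- For all finite subsets F, F' ⊂ ℕ the dual lattices satisfy (Γ_F)* = Σ_{n∈F} (Γ_n)* (where Γ_∅* = Γ*), (Γ_F)* ∩ (Γ_{F'})* = (Γ_{F∩F'})*, and [(Γ_F)* : Γ*] = ∏_{n∈F} [Γ : Γ_n]. Consequently, setting Σ := ⋃_{F ⊂ ℕ finite} (Γ_F)*, for each k ∈ Σ the set F_k := ⋂ {F ⊂ ℕ finite : k ∈ (Γ_F)*} is a finite set satisfying k ∈ (Γ_{F_k})*, i.e. there is a unique smallest finite F with k ∈ (Γ_F)*. -/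
open MeasureTheory Filter Set Topology

noncomputable section

/-- Euclidean `d`-space. -/
abbrev Euc (d : ℕ) : Type := EuclideanSpace ℝ (Fin d)

/-- The index `[Γ : Γ']` of a sublattice `Γ' ≤ Γ`. -/
def latIndex {d : ℕ} (Γ Γ' : Submodule ℤ (Euc d)) : ℕ :=
  AddSubgroup.relIndex Γ'.toAddSubgroup Γ.toAddSubgroup

/-- `Γ_F = ⋂_{n ∈ F} Γ_n`, with `Γ_∅ = Γ`. -/
def latF {d : ℕ} (Γ : Submodule ℤ (Euc d)) (Γn : ℕ → Submodule ℤ (Euc d))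
    (F : Finset ℕ) : Submodule ℤ (Euc d) :=
  Γ ⊓ F.inf Γn

/-- A coprime family of proper finite-index sublattices of `Γ`. -/
structure IsCoprimeSublatticeFamily {d : ℕ} (Γ : Submodule ℤ (Euc d))
    (Γn : ℕ → Submodule ℤ (Euc d)) : Prop where
  proper : ∀ n, Γn n < Γ
  finiteIndex : ∀ n, latIndex Γ (Γn n) ≠ 0
  coprime : ∀ i j, i ≠ j → Γn i ⊔ Γn j = Γ
  gcdLaw : ∀ F F' : Finset ℕ, latF Γ Γn F ⊔ latF Γ Γn F' = latF Γ Γn (F ∩ F')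
  summable : Summable fun n => ((latIndex Γ (Γn n) : ℝ))⁻¹

/-- `S` has natural density `c` along the centred open balls of radius `m`. -/
def HasNatDensity {d : ℕ} (S : Set (Euc d)) (c : ℝ) : Prop :=
  Tendsto (fun m : ℕ => (Nat.card ↥(S ∩ Metric.ball (0 : Euc d) m) : ℝ) /
    (volume (Metric.ball (0 : Euc d) (m : ℝ))).toReal) atTop (nhds c)

/-- The upper natural density of `S` along the centred open balls of radius `m`. -/
def upperNatDensity {d : ℕ} (S : Set (Euc d)) : ℝ :=
  limsup (fun m : ℕ => (Nat.card ↥(S ∩ Metric.ball (0 : Euc d) m) : ℝ) /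
    (volume (Metric.ball (0 : Euc d) (m : ℝ))).toReal) atTop

/-- The dual lattice `Λ* = {y ∈ ℝ^d : ⟨y,x⟩ ∈ ℤ for all x ∈ Λ}`. -/
def dualLattice {d : ℕ} (Λ : Submodule ℤ (Euc d)) : Submodule ℤ (Euc d) where
  carrier := {y | ∀ x ∈ Λ, ∃ m : ℤ, (inner ℝ y x : ℝ) = m}
  add_mem' := by
    intro a b ha hb x hx
    obtain ⟨m, hm⟩ := ha x hx
    obtain ⟨m', hm'⟩ := hb x hx
    exact ⟨m + m', by rw [inner_add_left, hm, hm']; push_cast; ring⟩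
  zero_mem' := fun x _ => ⟨0, by simp⟩
  smul_mem' := by
    intro c a ha x hx
    obtain ⟨m, hm⟩ := ha x hx
    refine ⟨c * m, ?_⟩
    have h : (c • a : Euc d) = (c : ℝ) • a := (Int.cast_smul_eq_zsmul ℝ c a).symm
    rw [h, real_inner_smul_left, hm]
    push_cast; ring

/-!
Dualising turns sums of lattices into intersections. Conversely, if `A + B = Γ` for a
lattice `Γ`, choose a real linear map `P` with `P Γ ⊆ B` and `(1 - P) Γ ⊆ A` (prescribe it
on a basis of `Γ`); every `y ∈ (A ∩ B)*` then splits as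
`y = (y ∘ P) + (y ∘ (1 - P)) ∈ A* + B*`.
For the index, a Smith normal form writes `Γ = ⊕ ℤ eᵢ` and `Λ = ⊕ ℤ aᵢ eᵢ`; the linear map
sending `eᵢ` to the dual basis vector of `aᵢ eᵢ` maps `(Γ, Λ)` onto `(Λ*, Γ*)`, so
`[Λ* : Γ*] = [Γ : Λ]`.
Coprimality makes `[Γ : Γ_F]` multiplicative in `F`, and since the finite sets `F` with
`k ∈ (Γ_F)*` are closed under intersection, there is a least one.
-/

open Module Submodule

universe u

theorem exists_isLeast_of_inf_mem {α : Type*} [SemilatticeInf α] [WellFoundedLT α] {s : Set α}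
    (hs : s.Nonempty) (hinf : ∀ a ∈ s, ∀ b ∈ s, a ⊓ b ∈ s) : ∃ a, IsLeast s a := by
  obtain ⟨a, ha, hmin⟩ := wellFounded_lt.has_min s hs
  exact ⟨a, ha, fun b hb => inf_eq_left.mp
    (eq_of_le_of_not_lt inf_le_left (hmin _ (hinf a ha b hb)))⟩

@[to_additive]
theorem Subgroup.relIndex_inf_of_sup_eq {G : Type*} [Group G] {H K L : Subgroup G} [H.Normal]
    (hK : K ≤ L) (h : H ⊔ K = L) : (H ⊓ K).relIndex L = H.relIndex L * K.relIndex L := by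
  rw [← relIndex_inf_mul_relIndex, inf_of_le_left hK, ← relIndex_sup_left, h]

theorem ZLattice.exists_basis_span_unitsSMul_of_relIndex_ne_zero {E : Type u}
    [NormedAddCommGroup E] [NormedSpace ℝ E] [FiniteDimensional ℝ E]
    (Γ : Submodule ℤ E) [DiscreteTopology Γ] [IsZLattice ℝ Γ] {Λ : Submodule ℤ E}
    (hle : Λ ≤ Γ) (hfin : Λ.toAddSubgroup.relIndex Γ.toAddSubgroup ≠ 0) :
    ∃ (ι : Type u) (_ : Finite ι) (e : Basis ι ℝ E) (u : ι → ℝˣ),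
      span ℤ (range e) = Γ ∧ span ℤ (range (e.unitsSMul u)) = Λ := by
  have := ZLattice.module_free ℝ Γ
  have := ZLattice.module_finite ℝ Γ
  set N : Submodule ℤ Γ := Λ.comap Γ.subtype
  obtain ⟨n, snf⟩ := N.smithNormalForm (Free.chooseBasis ℤ Γ)
  -- `hfin` says that `N` has finite index in `Γ`, so the Smith normal form is square
  have hrank : finrank ℤ N = finrank ℤ Γ := by
    rw [finrank_eq_card_basis snf.bN, finrank_eq_card_basis snf.bM, Fintype.card_fin,
      snf.toAddSubgroup_index_ne_zero_iff.mp hfin]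
  obtain ⟨b, a, ab, hab⟩ :=
    N.exists_smith_normal_form_of_rank_eq (Free.chooseBasis ℤ Γ) hrank
  have ha : ∀ i, (a i : ℝ) ≠ 0 := fun i h0 =>
    ab.ne_zero i (Subtype.ext (by simp [hab, Int.cast_eq_zero.mp h0]))
  refine ⟨_, inferInstance, b.ofZLatticeBasis ℝ Γ, fun i => Units.mk0 _ (ha i),
    b.ofZLatticeBasis_span ℝ Γ, ?_⟩
  have hΛ : Λ = (⊤ : Submodule ℤ N).map (Γ.subtype ∘ₗ N.subtype) := by
    rw [Submodule.map_top, LinearMap.range_comp, Submodule.range_subtype, map_comap_subtype,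
      inf_of_le_right hle]
  rw [hΛ, ← ab.span_eq, map_span, ← range_comp]
  congr 2
  funext i
  simp only [Function.comp_apply, LinearMap.coe_comp, coe_subtype, hab, Basis.unitsSMul_apply,
    Units.smul_def, Units.val_mk0, Basis.ofZLatticeBasis_apply, Int.cast_smul_eq_zsmul,
    SetLike.val_smul]

open LinearMap (BilinForm)

namespace LinearMap.BilinForm

variable {R K M : Type*} [CommRing R] [Field K] [AddCommGroup M] [Algebra R K] [Module R M]
  [Module K M] [IsScalarTower R K M] (B : BilinForm K M)

theorem dualSubmodule_antitone {N N' : Submodule R M} (h : N ≤ N') :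
    B.dualSubmodule N' ≤ B.dualSubmodule N :=
  fun _ hy x hx => hy x (h hx)

theorem dualSubmodule_sup (N N' : Submodule R M) :
    B.dualSubmodule (N ⊔ N') = B.dualSubmodule N ⊓ B.dualSubmodule N' := by
  refine le_antisymm (le_inf (B.dualSubmodule_antitone le_sup_left)
    (B.dualSubmodule_antitone le_sup_right)) ?_
  rintro y ⟨hy, hy'⟩ _ hxx'
  obtain ⟨x, hx, x', hx', rfl⟩ := mem_sup.mp hxx'
  rw [map_add]
  exact add_mem (hy x hx) (hy' x' hx')

theorem dualSubmodule_inf_of_sup_eq_span [FiniteDimensional K M] (hB : B.Nondegenerate)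
    {ι : Type*} (e : Basis ι K M) {N N' : Submodule R M} (h : N ⊔ N' = span R (Set.range e)) :
    B.dualSubmodule (N ⊓ N') = B.dualSubmodule N ⊔ B.dualSubmodule N' := by
  refine le_antisymm ?_ (sup_le (B.dualSubmodule_antitone inf_le_left)
    (B.dualSubmodule_antitone inf_le_right))
  intro y hy
  choose α hα β hβ hαβ using fun i => mem_sup.mp (h.ge (subset_span ⟨i, rfl⟩))
  set P : M →ₗ[K] M := e.constr K β
  have hP : ∀ x ∈ N ⊔ N', P x ∈ N' ∧ x - P x ∈ N := by
    suffices N ⊔ N' ≤ N'.comap (P.restrictScalars R) ⊓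
        N.comap ((LinearMap.id - P).restrictScalars R) from fun x hx => this hx
    rw [h, span_le]
    rintro _ ⟨i, rfl⟩
    have hPe : P (e i) = β i := e.constr_basis K β i
    refine ⟨?_, ?_⟩
    · change P (e i) ∈ N'
      exact hPe ▸ hβ i
    · change e i - P (e i) ∈ N
      rw [hPe, ← hαβ i, add_sub_cancel_right]
      exact hα i
  set u := (B.toDual hB).symm ((B y).comp P)
  have hu : ∀ x, B u x = B y (P x) := fun x => by
    rw [← toDual_def hB, LinearEquiv.apply_symm_apply]
    rfl
  have huN : u ∈ B.dualSubmodule N := by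
    intro x hx
    obtain ⟨hPx, hxPx⟩ := hP x (mem_sup_left hx)
    rw [hu]
    exact hy _ ⟨by simpa using sub_mem hx hxPx, hPx⟩
  have huN' : y - u ∈ B.dualSubmodule N' := by
    intro x hx
    obtain ⟨hPx, hxPx⟩ := hP x (mem_sup_right hx)
    rw [map_sub, LinearMap.sub_apply, hu, ← map_sub]
    exact hy _ ⟨hxPx, sub_mem hx hPx⟩
  simpa using add_mem_sup huN huN'

variable {ι : Type*} [Finite ι] [DecidableEq ι]

theorem smul_dualBasis_unitsSMul (hB : B.Nondegenerate) (e : Basis ι K M) (u : ι → Kˣ)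
    (i : ι) :
    (u i : K) • B.dualBasis hB (e.unitsSMul u) i = B.dualBasis hB e i := by
  refine (B.dualBasis hB (e.unitsSMul u)).ext_elem fun j => ?_
  rw [dualBasis_repr_apply, dualBasis_repr_apply, LinearMap.map_smul₂, apply_dualBasis_left,
    e.unitsSMul_apply, Units.smul_def, map_smul, apply_dualBasis_left]
  split_ifs with hji
  · subst hji
    simp
  · simp

theorem relIndex_dualSubmodule_span_unitsSMul (hB : B.Nondegenerate) (e : Basis ι K M)
    (u : ι → Kˣ) :
    (B.dualSubmodule (span R (Set.range e))).toAddSubgroup.relIndex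
        (B.dualSubmodule (span R (Set.range (e.unitsSMul u)))).toAddSubgroup =
      (span R (Set.range (e.unitsSMul u))).toAddSubgroup.relIndex
        (span R (Set.range e)).toAddSubgroup := by
  set c := e.unitsSMul u
  set T : M ≃ₗ[K] M := e.equiv (B.dualBasis hB c) (Equiv.refl ι)
  have hTe : (span R (Set.range e)).map (T.toLinearMap.restrictScalars R) =
      B.dualSubmodule (span R (Set.range c)) := by
    rw [dualSubmodule_span_of_basis B hB, map_span, ← Set.range_comp]
    congr 2
    funext i
    simp [T]
  have hTc : (span R (Set.range c)).map (T.toLinearMap.restrictScalars R) =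
      B.dualSubmodule (span R (Set.range e)) := by
    rw [dualSubmodule_span_of_basis B hB, map_span, ← Set.range_comp]
    congr 2
    funext i
    simp only [Function.comp_apply, T, c, LinearMap.restrictScalars_apply, LinearEquiv.coe_coe,
      e.unitsSMul_apply, Units.smul_def, map_smul, Basis.equiv_apply, Equiv.refl_apply]
    exact smul_dualBasis_unitsSMul B hB e u i
  rw [← hTe, ← hTc, map_toAddSubgroup, map_toAddSubgroup]
  exact AddSubgroup.relIndex_map_map_of_injective _ _ T.injective

end LinearMap.BilinForm

theorem nondegenerate_innerₗ (E : Type*) [NormedAddCommGroup E] [InnerProductSpace ℝ E] :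
    (innerₗ E).Nondegenerate :=
  isSymm_inner.isRefl.nondegenerate_iff_separatingLeft.mpr fun x hx =>
    inner_self_eq_zero.mp (hx x)

section DualLattice

variable {d : ℕ}

theorem dualLattice_eq_dualSubmodule (Λ : Submodule ℤ (Euc d)) :
    dualLattice Λ = LinearMap.BilinForm.dualSubmodule (innerₗ (Euc d)) Λ := by
  ext y
  simp [dualLattice, LinearMap.BilinForm.mem_dualSubmodule, Submodule.mem_one, eq_comm]

theorem dualLattice_sup (A B : Submodule ℤ (Euc d)) :
    dualLattice (A ⊔ B) = dualLattice A ⊓ dualLattice B := by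
  simp only [dualLattice_eq_dualSubmodule, LinearMap.BilinForm.dualSubmodule_sup]

theorem dualLattice_inf_of_sup_eq (Γ : Submodule ℤ (Euc d)) [DiscreteTopology Γ]
    [IsZLattice ℝ Γ] {A B : Submodule ℤ (Euc d)} (h : A ⊔ B = Γ) :
    dualLattice (A ⊓ B) = dualLattice A ⊔ dualLattice B := by
  have := ZLattice.module_free ℝ Γ
  simp only [dualLattice_eq_dualSubmodule]
  exact LinearMap.BilinForm.dualSubmodule_inf_of_sup_eq_span _ (nondegenerate_innerₗ _)
    ((Free.chooseBasis ℤ Γ).ofZLatticeBasis ℝ Γ)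
    (h.trans (Basis.ofZLatticeBasis_span ℝ Γ _).symm)

theorem relIndex_dualLattice_of_le (Γ : Submodule ℤ (Euc d)) [DiscreteTopology Γ]
    [IsZLattice ℝ Γ] {Λ : Submodule ℤ (Euc d)} (hle : Λ ≤ Γ)
    (hfin : Λ.toAddSubgroup.relIndex Γ.toAddSubgroup ≠ 0) :
    (dualLattice Γ).toAddSubgroup.relIndex (dualLattice Λ).toAddSubgroup =
      Λ.toAddSubgroup.relIndex Γ.toAddSubgroup := by
  classical
  obtain ⟨ι, _, e, u, rfl, rfl⟩ :=
    ZLattice.exists_basis_span_unitsSMul_of_relIndex_ne_zero Γ hle hfin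
  simp only [dualLattice_eq_dualSubmodule]
  exact LinearMap.BilinForm.relIndex_dualSubmodule_span_unitsSMul _ (nondegenerate_innerₗ _) e u

end DualLattice

theorem latF_insert {d : ℕ} (Γ : Submodule ℤ (Euc d)) (Γn : ℕ → Submodule ℤ (Euc d)) (n : ℕ)
    (F : Finset ℕ) : latF Γ Γn (insert n F) = latF Γ Γn F ⊓ Γn n := by
  rw [latF, latF, Finset.inf_insert, inf_left_comm, inf_comm (Γn n)]

namespace IsCoprimeSublatticeFamily

variable {d : ℕ} {Γ : Submodule ℤ (Euc d)} {Γn : ℕ → Submodule ℤ (Euc d)}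

theorem latF_sup_of_notMem (hfam : IsCoprimeSublatticeFamily Γ Γn) {n : ℕ} {F : Finset ℕ}
    (hn : n ∉ F) : latF Γ Γn F ⊔ Γn n = Γ := by
  have h := hfam.gcdLaw F {n}
  simpa [Finset.inter_singleton_of_notMem hn, latF, inf_of_le_right (hfam.proper n).le]
    using h

theorem relIndex_latF (hfam : IsCoprimeSublatticeFamily Γ Γn) (F : Finset ℕ) :
    (latF Γ Γn F).toAddSubgroup.relIndex Γ.toAddSubgroup = ∏ n ∈ F, latIndex Γ (Γn n) := by
  induction F using Finset.induction_on with
  | empty =>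
    simp only [latF, Finset.inf_empty, inf_top_eq, Finset.prod_empty]
    exact AddSubgroup.relIndex_self _
  | insert n F hn ih =>
    have hsup : (latF Γ Γn F).toAddSubgroup ⊔ (Γn n).toAddSubgroup = Γ.toAddSubgroup := by
      rw [← sup_toAddSubgroup, hfam.latF_sup_of_notMem hn]
    have hinf : (latF Γ Γn F ⊓ Γn n).toAddSubgroup =
        (latF Γ Γn F).toAddSubgroup ⊓ (Γn n).toAddSubgroup := rfl
    rw [Finset.prod_insert hn, latF_insert, hinf, mul_comm, ← ih]
    exact AddSubgroup.relIndex_inf_of_sup_eq (toAddSubgroup_mono (hfam.proper n).le) hsup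

theorem dualLattice_latF (hfam : IsCoprimeSublatticeFamily Γ Γn) [DiscreteTopology Γ]
    [IsZLattice ℝ Γ] (F : Finset ℕ) :
    dualLattice (latF Γ Γn F) = dualLattice Γ ⊔ F.sup (fun n => dualLattice (Γn n)) := by
  induction F using Finset.induction_on with
  | empty => simp [latF]
  | insert n F hn ih =>
    rw [latF_insert, dualLattice_inf_of_sup_eq Γ (hfam.latF_sup_of_notMem hn), ih,
      Finset.sup_insert, sup_assoc, sup_comm (F.sup _)]

end IsCoprimeSublatticeFamily

theorem stmt16 {d : ℕ} (Γ : Submodule ℤ (Euc d)) [DiscreteTopology Γ] [IsZLattice ℝ Γ]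
    (Γn : ℕ → Submodule ℤ (Euc d)) (hfam : IsCoprimeSublatticeFamily Γ Γn) :
    (∀ F F' : Finset ℕ,
      dualLattice (latF Γ Γn F) =
        dualLattice Γ ⊔ F.sup (fun n => dualLattice (Γn n)) ∧
      dualLattice (latF Γ Γn F) ⊓ dualLattice (latF Γ Γn F') =
        dualLattice (latF Γ Γn (F ∩ F')) ∧
      AddSubgroup.relIndex (dualLattice Γ).toAddSubgroup
          (dualLattice (latF Γ Γn F)).toAddSubgroup =
        ∏ n ∈ F, latIndex Γ (Γn n)) ∧
    ∀ k : Euc d, k ∈ ⋃ F : Finset ℕ, (dualLattice (latF Γ Γn F) : Set (Euc d)) →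
      ∃ F₀ : Finset ℕ, k ∈ dualLattice (latF Γ Γn F₀) ∧
        ∀ F : Finset ℕ, k ∈ dualLattice (latF Γ Γn F) → F₀ ⊆ F := by
  have hdual_inter : ∀ F F' : Finset ℕ,
      dualLattice (latF Γ Γn F) ⊓ dualLattice (latF Γ Γn F') =
        dualLattice (latF Γ Γn (F ∩ F')) := fun F F' => by
    rw [← hfam.gcdLaw F F', dualLattice_sup]
  refine ⟨fun F F' => ⟨hfam.dualLattice_latF F, hdual_inter F F', ?_⟩, fun k hk => ?_⟩
  · have hfin : (latF Γ Γn F).toAddSubgroup.relIndex Γ.toAddSubgroup ≠ 0 := by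
      rw [hfam.relIndex_latF F]
      exact Finset.prod_ne_zero_iff.mpr fun n _ => hfam.finiteIndex n
    rw [relIndex_dualLattice_of_le (Λ := latF Γ Γn F) Γ inf_le_left hfin, hfam.relIndex_latF F]
  · obtain ⟨F₀, hF₀, hleast⟩ :=
      exists_isLeast_of_inf_mem (s := {F | k ∈ dualLattice (latF Γ Γn F)})
      (mem_iUnion.mp hk) fun F hF F' hF' => by
        rw [mem_ofPred_eq, Finset.inf_eq_inter, ← hdual_inter]
        exact mem_inf.mpr ⟨hF, hF'⟩
    exact ⟨F₀, hF₀, fun F hF => hleast hF⟩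
end
end

section
/- The natural density of the set V of visible points of ℤ² exists along centred discs and equals 6/π², i.e. lim_{r→∞} card(V ∩ B_r(0)) / (π r²) = 6/π², where B_r(0) ⊂ ℝ² is the open disc of radius r centred at the origin. -/
/-!
The number of all lattice points in the disc of radius `r` is `~ π r²`, the unit disc being a
bounded convex set of area `π`. Every nonzero lattice point is uniquely `d • w` with `w` visible
and `d ≥ 1`, so Möbius inversion gives `V(r) = ∑_{d ≥ 1} μ(d) N(r/d)`, where `N(s)` counts the
nonzero lattice points in the disc of radius `s`. As `N(s) ≤ 9 s²`, dominated convergence yields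
`V(r) / r² → π ∑ μ(d)/d² = π / ζ(2) = 6/π`.
-/

open Filter Topology Finset ArithmeticFunction
open scoped Pointwise ArithmeticFunction.Moebius LSeries.notation

lemma abs_lt_of_sq_add_sq_lt {a b r : ℝ} (hr : 0 ≤ r) (h : a ^ 2 + b ^ 2 < r ^ 2) : |a| < r :=
  abs_lt_of_sq_lt_sq (by nlinarith) hr

lemma mul_sq_add_mul_sq_lt_mul_sq_iff {c : ℝ} (hc : 0 < c) {a b s : ℝ} :
    (c * a) ^ 2 + (c * b) ^ 2 < (c * s) ^ 2 ↔ a ^ 2 + b ^ 2 < s ^ 2 := by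
  rw [mul_pow, mul_pow, mul_pow, ← mul_add, mul_lt_mul_iff_right₀ (by positivity)]

lemma one_le_sq_add_sq {v : ℤ × ℤ} (hv : v ≠ 0) : (1 : ℝ) ≤ (v.1 : ℝ) ^ 2 + (v.2 : ℝ) ^ 2 := by
  have hne : v.1 ^ 2 + v.2 ^ 2 ≠ 0 := by
    simpa [sq, mul_self_add_mul_self_eq_zero, Prod.ext_iff] using hv
  have hnonneg : 0 ≤ v.1 ^ 2 + v.2 ^ 2 := by positivity
  exact_mod_cast (show 1 ≤ v.1 ^ 2 + v.2 ^ 2 by omega)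

lemma sum_divisors_moebius (n : ℕ) : ∑ d ∈ n.divisors, (μ d : ℝ) = if n = 1 then 1 else 0 := by
  simp_rw [← intCoe_apply]
  rw [← coe_mul_zeta_apply, coe_moebius_mul_coe_zeta, one_apply]

lemma card_filter_eq_one_eq_tsum_moebius {α : Type*} (s : Finset α) (g : α → ℕ) :
    (#{x ∈ s | g x = 1} : ℝ) = ∑' d : ℕ, (μ d : ℝ) * #{x ∈ s | g x ≠ 0 ∧ d ∣ g x} := by
  have hle : ∀ x ∈ s, ∀ d, g x ≠ 0 → d ∣ g x → d < s.sup g + 1 := fun x hx d hx0 hd =>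
    Nat.lt_succ_of_le ((Nat.le_of_dvd (Nat.pos_of_ne_zero hx0) hd).trans (le_sup hx))
  have hvanish : ∀ d ∉ range (s.sup g + 1), (μ d : ℝ) * #{x ∈ s | g x ≠ 0 ∧ d ∣ g x} = 0 := by
    intro d hd
    rw [mem_range] at hd
    suffices {x ∈ s | g x ≠ 0 ∧ d ∣ g x} = ∅ by simp [this]
    exact filter_eq_empty_iff.2 fun x hx ⟨hx0, hdx⟩ => hd (hle x hx d hx0 hdx)
  rw [tsum_eq_sum hvanish]
  calc (#{x ∈ s | g x = 1} : ℝ) = ∑ x ∈ s, ∑ d ∈ (g x).divisors, (μ d : ℝ) := by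
        simp [sum_divisors_moebius]
    _ = ∑ x ∈ s, ∑ d ∈ range (s.sup g + 1), if g x ≠ 0 ∧ d ∣ g x then (μ d : ℝ) else 0 := by
        refine sum_congr rfl fun x hx => ?_
        rw [← sum_filter]
        congr 1
        ext d
        simp only [Nat.mem_divisors, mem_filter, mem_range]
        exact ⟨fun ⟨hd, hx0⟩ => ⟨hle x hx d hx0 hd, hx0, hd⟩, fun ⟨_, hx0, hd⟩ => ⟨hd, hx0⟩⟩
    _ = _ := by
        rw [sum_comm]
        refine sum_congr rfl fun d _ => ?_
        rw [card_filter, Nat.cast_sum, mul_sum]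
        exact sum_congr rfl fun x _ => by split_ifs <;> simp

lemma hasSum_moebius_div_sq : HasSum (fun d : ℕ => (μ d : ℝ) / d ^ 2) (6 / Real.pi ^ 2) := by
  have hs : 1 < (2 : ℂ).re := by norm_num
  have hL : L ↗μ 2 = 6 / (Real.pi : ℂ) ^ 2 := by
    have h := LSeries_zeta_mul_Lseries_moebius hs
    rw [LSeries_zeta_eq_riemannZeta hs, riemannZeta_two] at h
    have hπ : (Real.pi : ℂ) ≠ 0 := by exact_mod_cast Real.pi_ne_zero
    field_simp at h ⊢
    linear_combination h
  have h := (LSeriesSummable_moebius_iff.2 hs).LSeriesHasSum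
  rw [LSeriesHasSum, hL] at h
  rw [← Complex.hasSum_ofReal]
  convert h using 1
  · ext n
    rcases eq_or_ne n 0 with rfl | hn
    · simp
    · rw [LSeries.term_of_ne_zero hn, Complex.cpow_ofNat]
      simp
  · simp

noncomputable def latticeDisc (r : ℝ) : Finset (ℤ × ℤ) :=
  {v ∈ Icc (-⌊r⌋) ⌊r⌋ ×ˢ Icc (-⌊r⌋) ⌊r⌋ | (v.1 : ℝ) ^ 2 + (v.2 : ℝ) ^ 2 < r ^ 2}

namespace latticeDisc

lemma mem_iff {r : ℝ} (hr : 0 ≤ r) {v : ℤ × ℤ} :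
    v ∈ latticeDisc r ↔ (v.1 : ℝ) ^ 2 + (v.2 : ℝ) ^ 2 < r ^ 2 := by
  refine mem_filter.trans (and_iff_right_of_imp fun h => ?_)
  have abs_le_floor {n : ℤ} (hn : |(n : ℝ)| < r) : |n| ≤ ⌊r⌋ :=
    Int.le_floor.mpr (by push_cast; exact hn.le)
  simp only [mem_product, mem_Icc, ← abs_le]
  exact ⟨abs_le_floor (abs_lt_of_sq_add_sq_lt hr h),
    abs_le_floor (abs_lt_of_sq_add_sq_lt hr ((add_comm _ _).trans_lt h))⟩

lemma smul_mem_iff {r : ℝ} (hr : 0 ≤ r) {d : ℕ} (hd : d ≠ 0) {v : ℤ × ℤ} :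
    (d : ℤ) • v ∈ latticeDisc r ↔ v ∈ latticeDisc (r / d) := by
  have hd' : (0 : ℝ) < d := by positivity
  rw [mem_iff hr, mem_iff (by positivity), ← mul_sq_add_mul_sq_lt_mul_sq_iff hd' (a := (v.1 : ℝ)),
    mul_div_cancel₀ _ hd'.ne']
  simp

lemma card_le {r : ℝ} (hr : 0 ≤ r) : (#(latticeDisc r) : ℝ) ≤ (2 * r + 1) ^ 2 := by
  have hside : (#(Icc (-⌊r⌋) ⌊r⌋) : ℤ) = 2 * ⌊r⌋ + 1 := by
    rw [Int.card_Icc, Int.toNat_of_nonneg (by have := Int.floor_nonneg.mpr hr; omega)]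
    ring
  calc (#(latticeDisc r) : ℝ) ≤ #(Icc (-⌊r⌋) ⌊r⌋ ×ˢ Icc (-⌊r⌋) ⌊r⌋) := by
        exact_mod_cast card_filter_le _ _
    _ = (2 * ⌊r⌋ + 1) ^ 2 := by
        rw [card_product, Nat.cast_mul, ← Int.cast_natCast, hside]
        push_cast
        ring
    _ ≤ (2 * r + 1) ^ 2 := by gcongr; exact Int.floor_le r

lemma card_erase_zero_le {r : ℝ} (hr : 0 ≤ r) :
    (#((latticeDisc r).erase 0) : ℝ) ≤ 9 * r ^ 2 := by
  rcases le_or_gt r 1 with hr1 | hr1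
  · suffices (latticeDisc r).erase 0 = ∅ by simp [this]; positivity
    refine eq_empty_of_forall_notMem fun v hv => ?_
    rw [mem_erase, mem_iff hr] at hv
    nlinarith [one_le_sq_add_sq hv.1]
  · calc (#((latticeDisc r).erase 0) : ℝ) ≤ #(latticeDisc r) := by
          exact_mod_cast card_erase_le
      _ ≤ (2 * r + 1) ^ 2 := card_le hr
      _ ≤ 9 * r ^ 2 := by nlinarith

lemma card_filter_dvd_gcd {r : ℝ} (hr : 0 ≤ r) {d : ℕ} (hd : d ≠ 0) :
    #{w ∈ latticeDisc r | Int.gcd w.1 w.2 ≠ 0 ∧ d ∣ Int.gcd w.1 w.2} =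
      #((latticeDisc (r / d)).erase 0) := by
  have hd' : (d : ℤ) ≠ 0 := by exact_mod_cast hd
  have hgcd {v : ℤ × ℤ} : Int.gcd v.1 v.2 = 0 ↔ v = 0 := by
    simp [Int.gcd_eq_zero_iff, Prod.ext_iff]
  symm
  refine card_nbij ((d : ℤ) • ·) (fun v hv => ?_) (fun v _ w _ h => smul_right_injective _ hd' h)
    (fun w hw => ?_)
  · rw [mem_coe, mem_erase] at hv
    rw [mem_coe, mem_filter, smul_mem_iff hr hd, Prod.smul_fst, Prod.smul_snd, smul_eq_mul,
      smul_eq_mul, Int.gcd_mul_left, Int.natAbs_natCast]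
    exact ⟨hv.2, mul_ne_zero hd (mt hgcd.1 hv.1), dvd_mul_right _ _⟩
  · rw [mem_coe, mem_filter, Ne, hgcd] at hw
    obtain ⟨hw, hw0, hdw⟩ := hw
    obtain ⟨⟨a, ha⟩, ⟨b, hb⟩⟩ := Int.dvd_gcd_iff.1 hdw
    have hw' : w = (d : ℤ) • (a, b) := Prod.ext ha hb
    refine ⟨(a, b), ?_, hw'.symm⟩
    rw [mem_coe, mem_erase, ← smul_mem_iff hr hd, ← hw']
    exact ⟨fun h => hw0 (by rw [hw', h, smul_zero]), hw⟩

lemma card_visible_eq_tsum {r : ℝ} (hr : 0 ≤ r) :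
    (#{v ∈ latticeDisc r | Int.gcd v.1 v.2 = 1} : ℝ) =
      ∑' d : ℕ, (μ d : ℝ) * #((latticeDisc (r / d)).erase 0) := by
  rw [card_filter_eq_one_eq_tsum_moebius]
  refine tsum_congr fun d => ?_
  rcases eq_or_ne d 0 with rfl | hd
  · simp
  · rw [card_filter_dvd_gcd hr hd]

end latticeDisc

-- The unit disc and `ℤ²` inside `Fin 2 → ℝ`, in the form used by
-- `tendsto_card_div_pow_atTop_volume'`.
local notation "unitDisc" => WithLp.toLp 2 ⁻¹' Metric.ball (0 : EuclideanSpace ℝ (Fin 2)) 1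
local notation "intLattice" =>
  (Submodule.span ℤ (Set.range (Pi.basisFun ℝ (Fin 2))) : Set (Fin 2 → ℝ))

lemma mem_unitDisc {x : Fin 2 → ℝ} : x ∈ unitDisc ↔ x 0 ^ 2 + x 1 ^ 2 < 1 := by
  rw [Set.mem_preimage, mem_ball_zero_iff, ← sq_lt_one_iff₀ (norm_nonneg _),
    EuclideanSpace.real_norm_sq_eq, Fin.sum_univ_two]

lemma mem_inv_smul_intLattice {r : ℝ} (hr : r ≠ 0) {x : Fin 2 → ℝ} :
    x ∈ r⁻¹ • intLattice ↔ ∀ i, ∃ n : ℤ, (n : ℝ) = r * x i := by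
  rw [Set.mem_smul_set_iff_inv_smul_mem₀ (inv_ne_zero hr), inv_inv, SetLike.mem_coe,
    Module.Basis.mem_span_iff_repr_mem]
  simp

lemma natCard_unitDisc_inter_inv_smul_intLattice {r : ℝ} (hr : 0 < r) :
    Nat.card ↥(unitDisc ∩ r⁻¹ • intLattice) = #(latticeDisc r) := by
  set e : ℤ × ℤ → Fin 2 → ℝ := fun v => r⁻¹ • ![(v.1 : ℝ), v.2]
  have he : Function.Injective e := by
    intro v w h
    have h0 := congrFun h 0
    have h1 := congrFun h 1
    simp only [e, Pi.smul_apply, Matrix.cons_val_zero, Matrix.cons_val_one, smul_eq_mul,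
      mul_eq_mul_left_iff, inv_eq_zero, hr.ne', or_false, Int.cast_inj] at h0 h1
    exact Prod.ext h0 h1
  suffices h : unitDisc ∩ r⁻¹ • intLattice = e '' (latticeDisc r : Set (ℤ × ℤ)) by
    rw [h, Nat.card_coe_set_eq, Set.ncard_image_of_injective _ he, Set.ncard_coe_finset]
  ext x
  simp only [Set.mem_inter_iff, mem_unitDisc, mem_inv_smul_intLattice hr.ne', Set.mem_image,
    mem_coe, latticeDisc.mem_iff hr.le]
  constructor
  · rintro ⟨hx, hn⟩
    choose n hn using hn
    refine ⟨(n 0, n 1), ?_, ?_⟩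
    · simpa [hn] using (mul_sq_add_mul_sq_lt_mul_sq_iff hr (s := 1)).2 (by simpa using hx)
    · ext i; fin_cases i <;> simp [e, hn, hr.ne']
  · rintro ⟨v, hv, rfl⟩
    refine ⟨?_, fun i => by fin_cases i <;> simp [e, hr.ne']⟩
    simpa [e, hr.ne'] using (mul_sq_add_mul_sq_lt_mul_sq_iff (inv_pos.2 hr) (s := r)).2 hv

namespace latticeDisc

lemma tendsto_card_div_sq :
    Tendsto (fun r : ℝ => (#(latticeDisc r) : ℝ) / r ^ 2) atTop (𝓝 Real.pi) := by
  have hconv : Convex ℝ unitDisc :=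
    (convex_ball _ _).linear_preimage (WithLp.linearEquiv 2 ℝ (Fin 2 → ℝ)).symm.toLinearMap
  have hzero : (0 : Fin 2 → ℝ) ∈ unitDisc := by simp
  have hmono ⦃x y : ℝ⦄ (hx : 0 < x) (hxy : x ≤ y) : x • unitDisc ⊆ y • unitDisc := by
    have hy : y ≠ 0 := (hx.trans_le hxy).ne'
    calc x • unitDisc = y • ((x / y) • unitDisc) := by rw [smul_smul, mul_div_cancel₀ _ hy]
      _ ⊆ y • unitDisc := Set.smul_set_mono <| Set.smul_set_subset_iff.2 fun z hz =>
          hconv.smul_mem_of_zero_mem hzero hz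
            ⟨div_nonneg hx.le (hx.le.trans hxy), div_le_one_of_le₀ hxy (hx.le.trans hxy)⟩
  have hvol : MeasureTheory.volume.real unitDisc = Real.pi := by
    rw [MeasureTheory.measureReal_def, (PiLp.volume_preserving_toLp (Fin 2)).measure_preimage
      Metric.isOpen_ball.measurableSet.nullMeasurableSet]
    simp [Real.pi_nonneg]
  have h := tendsto_card_div_pow_atTop_volume' unitDisc
    ((PiLp.antilipschitzWith_toLp 2 _).isBounded_preimage Metric.isBounded_ball)
    (Metric.isOpen_ball.measurableSet.preimage (by fun_prop)) (hconv.addHaar_frontier _) hmono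
  rw [hvol] at h
  refine h.congr' ?_
  filter_upwards [eventually_gt_atTop 0] with r hr
  rw [natCard_unitDisc_inter_inv_smul_intLattice hr, Fintype.card_fin]

lemma tendsto_card_erase_zero_div_sq :
    Tendsto (fun r : ℝ => (#((latticeDisc r).erase 0) : ℝ) / r ^ 2) atTop (𝓝 Real.pi) := by
  have hinv : Tendsto (fun r : ℝ => 1 / r ^ 2) atTop (𝓝 0) :=
    tendsto_const_nhds.div_atTop (tendsto_pow_atTop two_ne_zero)
  have h := tendsto_card_div_sq.sub hinv
  rw [sub_zero] at h
  refine h.congr' ?_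
  filter_upwards [eventually_gt_atTop 0] with r hr
  have h0 : (0 : ℤ × ℤ) ∈ latticeDisc r := (mem_iff hr.le).2 (by simpa using pow_pos hr 2)
  rw [card_erase_of_mem h0, Nat.cast_sub (card_pos.2 ⟨0, h0⟩), sub_div, Nat.cast_one]

lemma tendsto_card_visible_div_sq :
    Tendsto (fun r : ℝ => (#{v ∈ latticeDisc r | Int.gcd v.1 v.2 = 1} : ℝ) / r ^ 2) atTop
      (𝓝 (6 / Real.pi)) := by
  set f : ℝ → ℕ → ℝ := fun r d => (μ d : ℝ) * #((latticeDisc (r / d)).erase 0) / r ^ 2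
  have hlim (d : ℕ) : Tendsto (fun r => f r d) atTop (𝓝 (Real.pi * ((μ d : ℝ) / d ^ 2))) := by
    rcases eq_or_ne d 0 with rfl | hd
    · simp [f]
    have hd' : (0 : ℝ) < d := by positivity
    have h := ((tendsto_card_erase_zero_div_sq.comp (tendsto_id.atTop_div_const hd')).const_mul
      (μ d : ℝ)).div_const ((d : ℝ) ^ 2)
    rw [show Real.pi * ((μ d : ℝ) / d ^ 2) = μ d * Real.pi / d ^ 2 by ring]
    refine h.congr' ?_
    filter_upwards [eventually_gt_atTop 0] with r hr
    simp only [f, Function.comp_apply, id]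
    field_simp
  have hbound : ∀ᶠ r in atTop, ∀ d : ℕ, ‖f r d‖ ≤ 9 / d ^ 2 := by
    filter_upwards [eventually_gt_atTop 0] with r hr d
    calc ‖f r d‖ = |(μ d : ℝ)| * #((latticeDisc (r / d)).erase 0) / r ^ 2 := by
          rw [Real.norm_eq_abs, abs_div, abs_mul, Nat.abs_cast, abs_of_pos (pow_pos hr 2)]
      _ ≤ 1 * (9 * (r / d) ^ 2) / r ^ 2 := by
          gcongr
          · exact_mod_cast abs_moebius_le_one
          · exact card_erase_zero_le (by positivity)
      _ = 9 / d ^ 2 := by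
          rcases eq_or_ne d 0 with rfl | hd
          · simp
          · field_simp
  have hsum : Summable fun d : ℕ => 9 / (d : ℝ) ^ 2 := by
    simpa [div_eq_mul_inv] using (Real.summable_nat_pow_inv.2 one_lt_two).mul_left 9
  have h := tendsto_tsum_of_dominated_convergence hsum hlim hbound
  rw [tsum_mul_left, hasSum_moebius_div_sq.tsum_eq,
    show Real.pi * (6 / Real.pi ^ 2) = 6 / Real.pi by field_simp] at h
  refine h.congr' ?_
  filter_upwards [eventually_ge_atTop 0] with r hr
  rw [card_visible_eq_tsum hr, tsum_div_const]

end latticeDisc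

/-- The natural density of the visible points of `ℤ²` exists along centred open discs
and equals `6/π²`: `lim_{r→∞} card(V ∩ B_r(0)) / (π r²) = 6/π²`. -/
theorem stmt18 :
    Tendsto (fun r : ℝ =>
        (Nat.card ↥{v : ℤ × ℤ | Int.gcd v.1 v.2 = 1 ∧
            (v.1 : ℝ) ^ 2 + (v.2 : ℝ) ^ 2 < r ^ 2} : ℝ) / (Real.pi * r ^ 2))
      atTop (nhds (6 / Real.pi ^ 2)) := by
  have h := latticeDisc.tendsto_card_visible_div_sq.div_const Real.pi
  rw [div_div, ← sq] at h
  refine h.congr' ?_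
  filter_upwards [eventually_ge_atTop 0] with r hr
  have hset : {v : ℤ × ℤ | Int.gcd v.1 v.2 = 1 ∧ (v.1 : ℝ) ^ 2 + (v.2 : ℝ) ^ 2 < r ^ 2} =
      ↑{v ∈ latticeDisc r | Int.gcd v.1 v.2 = 1} := by
    ext v
    simp [latticeDisc.mem_iff hr, and_comm]
  rw [hset, Nat.card_coe_set_eq, Set.ncard_coe_finset, div_div, mul_comm]
end

section
/- A subset A ⊆ ℤ² belongs to the closure of the translation orbit of the set V of visible points of ℤ² in the local topology — that is, for every R > 0 there exists t ∈ ℤ² with A ∩ B_R(0) = (t + V) ∩ B_R(0), where B_R(0) ⊂ ℝ² is the open disc of radius R centred at the origin — if and only if for every prime p there exists c ∈ ℤ² such that A ∩ (c + pℤ²) = ∅. -/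
/-!
Reduce `ℤ²` modulo `p` coordinatewise: `z - t` is visible iff `z ≢ t (mod p)` for every
prime `p`. If `A` met every class modulo `p`, a finite set of representatives could not all
be visible from a single `t`. Conversely, on a finite window `F` choose `t` by the Chinese
remainder theorem: for the primes `p ≤ #(A ∩ F)` put `t` in a class missed by `A`, and for
each `w ∈ F \ A` make `t ≡ w` modulo a prime `q_w` of its own, larger than the diameter of
`F`, so that `w - t` is invisible while no point of `A ∩ F` is affected. Once `t₂` is fixed
only finitely many further primes divide some `z₂ - t₂` with `z ∈ A ∩ F`; they exceed
`#(A ∩ F)`, so a second application of the Chinese remainder theorem moves `t₁` off every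
residue `z₁` modulo each of them.
-/

def visiblePoints : Set (ℤ × ℤ) := {v | Int.gcd v.1 v.2 = 1}

open Finset Function

def reduceMod (n : ℕ) : ℤ × ℤ →+ ZMod n × ZMod n :=
  (Int.castAddHom (ZMod n)).prodMap (Int.castAddHom (ZMod n))

@[simp]
lemma reduceMod_apply (n : ℕ) (z : ℤ × ℤ) :
    reduceMod n z = ((z.1 : ZMod n), (z.2 : ZMod n)) :=
  rfl

lemma reduceMod_surjective (n : ℕ) : Surjective (reduceMod n) :=
  Prod.map_surjective.2 ⟨ZMod.intCast_surjective, ZMod.intCast_surjective⟩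

lemma reduceMod_eq_reduceMod_iff {n : ℕ} {a b : ℤ × ℤ} :
    reduceMod n a = reduceMod n b ↔ (n : ℤ) ∣ b.1 - a.1 ∧ (n : ℤ) ∣ b.2 - a.2 := by
  simp only [reduceMod_apply, Prod.ext_iff, ZMod.intCast_eq_intCast_iff_dvd_sub]

lemma eq_of_reduceMod_eq_of_natAbs_le {p N : ℕ} (hp : 2 * N < p) {a b : ℤ × ℤ}
    (ha : a.1.natAbs ≤ N ∧ a.2.natAbs ≤ N) (hb : b.1.natAbs ≤ N ∧ b.2.natAbs ≤ N)
    (hab : reduceMod p a = reduceMod p b) : a = b := by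
  obtain ⟨h₁, h₂⟩ := reduceMod_eq_reduceMod_iff.1 hab
  have h₁ := Int.eq_zero_of_abs_lt_dvd h₁ (abs_lt.2 ⟨by omega, by omega⟩)
  have h₂ := Int.eq_zero_of_abs_lt_dvd h₂ (abs_lt.2 ⟨by omega, by omega⟩)
  exact Prod.ext (by omega) (by omega)

lemma mem_visiblePoints_iff {v : ℤ × ℤ} :
    v ∈ visiblePoints ↔ ∀ p : ℕ, p.Prime → reduceMod p v ≠ 0 := by
  simp only [visiblePoints, Set.mem_ofPred_eq, Nat.eq_one_iff_not_exists_prime_dvd, Ne,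
    reduceMod_apply, Prod.mk_eq_zero, ZMod.intCast_zmod_eq_zero_iff_dvd, Int.dvd_gcd_iff]

lemma sub_mem_visiblePoints_iff {z t : ℤ × ℤ} :
    z - t ∈ visiblePoints ↔ ∀ p : ℕ, p.Prime → reduceMod p t ≠ reduceMod p z := by
  simp only [mem_visiblePoints_iff, map_sub, sub_ne_zero]
  exact forall₂_congr fun _ _ => ne_comm

lemma mem_image_add_visiblePoints_iff {z t : ℤ × ℤ} :
    z ∈ (fun v => t + v) '' visiblePoints ↔ z - t ∈ visiblePoints := by
  rw [Set.image_add_left, Set.mem_preimage, neg_add_eq_sub]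

lemma infinite_setOf_intCast_eq (T : Finset ℕ) (hT : ∀ p ∈ T, p.Prime) (f : ℕ → ℤ) :
    {x : ℤ | ∀ p ∈ T, (x : ZMod p) = f p}.Infinite := by
  have hcop : Pairwise (onFun IsCoprime fun p : T => Ideal.span {((p : ℕ) : ℤ)}) := by
    intro p q hpq
    rw [onFun, Ideal.isCoprime_span_singleton_iff, Nat.isCoprime_iff_coprime,
      Nat.coprime_primes (hT p p.2) (hT q q.2)]
    exact Subtype.coe_injective.ne hpq
  obtain ⟨x, hx⟩ := Ideal.exists_forall_sub_mem_ideal hcop fun p => f p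
  set M : ℕ := ∏ p ∈ T, p
  have hM : (M : ℤ) ≠ 0 := by
    exact_mod_cast prod_ne_zero_iff.2 fun p hp => (hT p hp).ne_zero
  refine Set.infinite_of_injective_forall_mem (f := fun k : ℕ => x + M * k)
    (fun k l hkl => by exact_mod_cast mul_left_cancel₀ hM (add_left_cancel hkl))
    fun k p hp => ?_
  have hMp : (M : ZMod p) = 0 := (ZMod.natCast_eq_zero_iff _ _).2 (dvd_prod_of_mem _ hp)
  have hxp := hx ⟨p, hp⟩
  rw [Ideal.mem_span_singleton, ← ZMod.intCast_eq_intCast_iff_dvd_sub] at hxp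
  simp only [Int.cast_add, Int.cast_mul, Int.cast_natCast, hMp, zero_mul, add_zero, hxp]

lemma exists_intCast_notMem {p : ℕ} (s : Finset ℤ) (hs : #s < p) :
    ∃ r : ℤ, ∀ a ∈ s, (a : ZMod p) ≠ r := by
  have : NeZero p := ⟨by omega⟩
  obtain ⟨ρ, -, hρ⟩ := exists_mem_notMem_of_card_lt_card (s := s.image ((↑) : ℤ → ZMod p))
    (t := univ) (by rw [card_univ, ZMod.card]; exact card_image_le.trans_lt hs)
  obtain ⟨r, rfl⟩ := ZMod.intCast_surjective ρ
  exact ⟨r, fun a ha h => hρ (mem_image.2 ⟨a, ha, h⟩)⟩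

lemma exists_injective_prime_gt (α : Type*) [Countable α] (B : ℕ) :
    ∃ q : α → ℕ, Injective q ∧ ∀ a, (q a).Prime ∧ B < q a := by
  obtain ⟨e, he⟩ := Countable.exists_injective_nat α
  have hinf : (Set.ofPred fun p => p.Prime ∧ B < p).Infinite :=
    (Nat.infinite_setOfPred_prime.sdiff (Set.finite_le_nat B)).mono
      fun p hp => ⟨hp.1, not_le.1 hp.2⟩
  exact ⟨Nat.nth _ ∘ e, (Nat.nth_injective hinf).comp he,
    fun a => Nat.nth_mem_of_infinite hinf _⟩

lemma exists_reduceMod_eq_of_mem_and_ne_of_notMem (S : Finset (ℤ × ℤ)) (T : Finset ℕ)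
    (hT : ∀ p ∈ T, p.Prime) (hsmall : ∀ p, p.Prime → p ≤ #S → p ∈ T) (c : ℕ → ℤ × ℤ) :
    ∃ t : ℤ × ℤ, (∀ p ∈ T, reduceMod p t = reduceMod p (c p)) ∧
      ∀ z ∈ S, ∀ p, p.Prime → p ∉ T → reduceMod p t ≠ reduceMod p z := by
  obtain ⟨t₂, ht₂, ht₂S⟩ :=
    (infinite_setOf_intCast_eq T hT fun p => (c p).2).exists_notMem_finset (S.image Prod.snd)
  set D := S.biUnion fun z => (z.2 - t₂).natAbs.primeFactors
  have hD : ∀ p ∈ D, p.Prime := fun p hp => by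
    obtain ⟨z, -, hz⟩ := mem_biUnion.1 hp
    exact Nat.prime_of_mem_primeFactors hz
  have hr : ∀ p ∈ D, p ∉ T → ∃ r : ℤ, ∀ a ∈ S.image Prod.fst, (a : ZMod p) ≠ r :=
    fun p hp hpT => exists_intCast_notMem _ <|
      card_image_le.trans_lt (not_le.1 fun h => hpT (hsmall p (hD p hp) h))
  choose! r hr using hr
  obtain ⟨t₁, ht₁⟩ := (infinite_setOf_intCast_eq (T ∪ D)
    (fun p hp => (mem_union.1 hp).elim (hT p) (hD p))
    fun p => if p ∈ T then (c p).1 else r p).nonempty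
  refine ⟨(t₁, t₂), fun p hp => ?_, fun z hz p hp hpT hzt => ?_⟩
  · simp only [reduceMod_apply, ht₁ p (mem_union_left _ hp), if_pos hp, ht₂ p hp]
  · obtain ⟨h₁, h₂⟩ := Prod.ext_iff.1 hzt
    have hpD : p ∈ D := by
      refine mem_biUnion.2 ⟨z, hz, Nat.mem_primeFactors.2 ⟨hp, ?_, ?_⟩⟩
      · exact Int.natCast_dvd.1 ((ZMod.intCast_eq_intCast_iff_dvd_sub _ _ _).1 h₂)
      · exact Int.natAbs_ne_zero.2 (sub_ne_zero.2 fun h => ht₂S (mem_image.2 ⟨z, hz, h⟩))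
    have := ht₁ p (mem_union_right _ hpD)
    rw [if_neg hpT] at this
    exact hr p hpD hpT z.1 (mem_image_of_mem _ hz) (h₁.symm.trans this)

lemma exists_natAbs_le (F : Finset (ℤ × ℤ)) :
    ∃ N : ℕ, ∀ z ∈ F, z.1.natAbs ≤ N ∧ z.2.natAbs ≤ N :=
  ⟨F.sup fun z => z.1.natAbs ⊔ z.2.natAbs, fun _ hz =>
    sup_le_iff.1 (le_sup (f := fun z : ℤ × ℤ => z.1.natAbs ⊔ z.2.natAbs) hz)⟩

theorem exists_sub_mem_visiblePoints_iff {A : Set (ℤ × ℤ)}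
    (hA : ∀ p : ℕ, p.Prime → ∃ c : ℤ × ℤ, ∀ z ∈ A, reduceMod p c ≠ reduceMod p z)
    (F : Finset (ℤ × ℤ)) : ∃ t : ℤ × ℤ, ∀ z ∈ F, (z ∈ A ↔ z - t ∈ visiblePoints) := by
  classical
  set S := F.filter (· ∈ A)
  obtain ⟨N, hN⟩ := exists_natAbs_le F
  obtain ⟨q, hq, hqp⟩ := exists_injective_prime_gt (ℤ × ℤ) (#S + 2 * N)
  choose! c hc using hA
  set T := (range (#S + 1)).filter Nat.Prime ∪ (F.filter (· ∉ A)).image q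
  have hT : ∀ p ∈ T, p.Prime := by
    simp only [T, mem_union, mem_filter, mem_image]
    rintro p (⟨-, hp⟩ | ⟨w, -, rfl⟩)
    exacts [hp, (hqp w).1]
  have hsmall : ∀ p, p.Prime → p ≤ #S → p ∈ T := fun p hp hpS =>
    mem_union_left _ (mem_filter.2 ⟨mem_range.2 (Nat.lt_succ_of_le hpS), hp⟩)
  obtain ⟨t, htT, htoff⟩ := exists_reduceMod_eq_of_mem_and_ne_of_notMem S T hT hsmall
    fun p => if p ≤ #S then c p else invFun q p
  have hq_target : ∀ w, (if q w ≤ #S then c (q w) else invFun q (q w)) = w := fun w => by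
    rw [if_neg (by have := (hqp w).2; omega), leftInverse_invFun hq w]
  refine ⟨t, fun z hz => ⟨fun hzA => sub_mem_visiblePoints_iff.2 fun p hp => ?_,
    fun hvis => by_contra fun hzA => ?_⟩⟩
  · by_cases hpT : p ∈ T
    · rw [htT p hpT]
      split_ifs with hpS
      · exact hc p hp z hzA
      obtain ⟨w, hw, rfl⟩ : ∃ w ∈ F.filter (· ∉ A), q w = p := by
        simp only [T, mem_union, mem_filter, mem_range] at hpT
        exact mem_image.1 (hpT.resolve_left fun h => hpS (by omega))
      rw [leftInverse_invFun hq w]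
      intro hwz
      have := eq_of_reduceMod_eq_of_natAbs_le (by have := (hqp w).2; omega)
        (hN w (mem_filter.1 hw).1) (hN z hz) hwz
      exact (mem_filter.1 hw).2 (this ▸ hzA)
    · exact htoff z (mem_filter.2 ⟨hz, hzA⟩) p hp hpT
  · have hqz : q z ∈ T := mem_union_right _ (mem_image_of_mem q (mem_filter.2 ⟨hz, hzA⟩))
    exact sub_mem_visiblePoints_iff.1 hvis (q z) (hqp z).1 (by rw [htT _ hqz, hq_target])

theorem exists_reduceMod_ne_of_forall_finset {A : Set (ℤ × ℤ)} {p : ℕ} (hp : p.Prime)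
    (H : ∀ s : Finset (ℤ × ℤ), ↑s ⊆ A → ∃ t : ℤ × ℤ, ∀ z ∈ s, z - t ∈ visiblePoints) :
    ∃ c : ℤ × ℤ, ∀ z ∈ A, reduceMod p c ≠ reduceMod p z := by
  have : Fact p.Prime := ⟨hp⟩
  by_contra! h
  have hcover : ∀ ρ, ∃ z ∈ A, reduceMod p z = ρ := fun ρ => by
    obtain ⟨c, rfl⟩ := reduceMod_surjective p ρ
    obtain ⟨z, hz, hcz⟩ := h c
    exact ⟨z, hz, hcz.symm⟩
  choose g hgA hg using hcover
  obtain ⟨t, ht⟩ := H (univ.image g) (by simpa [Set.range_subset_iff] using hgA)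
  exact sub_mem_visiblePoints_iff.1 (ht _ (mem_image_of_mem g (mem_univ (reduceMod p t))))
    p hp (hg _).symm

lemma finite_setOf_sq_add_sq_lt (R : ℝ) :
    {z : ℤ × ℤ | (z.1 : ℝ) ^ 2 + (z.2 : ℝ) ^ 2 < R ^ 2}.Finite := by
  set N := ⌈|R|⌉
  have hbound : ∀ a : ℤ, (a : ℝ) ^ 2 < R ^ 2 → a ∈ Set.Icc (-N) N := fun a ha => by
    have : ((|a| : ℤ) : ℝ) < N := by
      rw [Int.cast_abs]; exact (sq_lt_sq.1 ha).trans_le (Int.le_ceil _)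
    exact abs_le.1 (Int.cast_lt.1 this).le
  refine ((Set.finite_Icc (-N) N).prod (Set.finite_Icc (-N) N)).subset fun z hz => ?_
  have hz : (z.1 : ℝ) ^ 2 + (z.2 : ℝ) ^ 2 < R ^ 2 := hz
  exact ⟨hbound _ (by nlinarith [sq_nonneg (z.2 : ℝ)]),
    hbound _ (by nlinarith [sq_nonneg (z.1 : ℝ)])⟩

lemma exists_pos_forall_sq_add_sq_lt (s : Finset (ℤ × ℤ)) :
    ∃ R : ℝ, 0 < R ∧ ∀ z ∈ s, (z.1 : ℝ) ^ 2 + (z.2 : ℝ) ^ 2 < R ^ 2 := by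
  obtain ⟨M, hM⟩ := (s.image fun z => (z.1 : ℝ) ^ 2 + (z.2 : ℝ) ^ 2).exists_le
  refine ⟨|M| + 1, by positivity, fun z hz => ?_⟩
  nlinarith [hM _ (mem_image_of_mem _ hz), abs_nonneg M, le_abs_self M]

/-- A subset `A ⊆ ℤ²` lies in the local-topology orbit closure of the visible points
(i.e. every central patch of `A` is a patch of a `ℤ²`-translate of `V`) if and only if
for every prime `p` it misses some coset `c + pℤ²`. -/
theorem stmt19 (A : Set (ℤ × ℤ)) :
    (∀ R : ℝ, 0 < R → ∃ t : ℤ × ℤ,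
        {z : ℤ × ℤ | z ∈ A ∧ (z.1 : ℝ) ^ 2 + (z.2 : ℝ) ^ 2 < R ^ 2} =
          {z : ℤ × ℤ | z ∈ (fun v => t + v) '' visiblePoints ∧
            (z.1 : ℝ) ^ 2 + (z.2 : ℝ) ^ 2 < R ^ 2}) ↔
      ∀ p : ℕ, p.Prime → ∃ c : ℤ × ℤ, ∀ z ∈ A,
        ¬((p : ℤ) ∣ z.1 - c.1 ∧ (p : ℤ) ∣ z.2 - c.2) := by
  simp only [Set.ext_iff, Set.mem_ofPred_eq, mem_image_add_visiblePoints_iff,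
    and_congr_left_iff, ← reduceMod_eq_reduceMod_iff]
  refine ⟨fun H p hp => exists_reduceMod_ne_of_forall_finset hp fun s hs => ?_,
    fun hA R _ => ?_⟩
  · obtain ⟨R, hR, hsR⟩ := exists_pos_forall_sq_add_sq_lt s
    obtain ⟨t, ht⟩ := H R hR
    exact ⟨t, fun z hz => (ht z (hsR z hz)).1 (hs hz)⟩
  · have hfin := finite_setOf_sq_add_sq_lt R
    obtain ⟨t, ht⟩ := exists_sub_mem_visiblePoints_iff hA hfin.toFinset
    exact ⟨t, fun z hz => ht z (hfin.mem_toFinset.2 hz)⟩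
end
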